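/- Let X be a complete CAT(0) space, x₀ ∈ X, and let A, A' ⊆ X be compact sets with A ⊆ A'. Suppose D is a closed bounded subset of X containing x₀ such that for every x ∈ D \ {x₀}, the geodesic segment [x₀, x] lies in D and [x₀, x) lies in the interior of D (a strict star domain). Then for every point y ∈ X \ int(D), the geodesic segment [x₀, y] intersects the boundary ∂D in exactly one point. -/

import Mathlib

/-- A uniquely geodesic metric space with convex metric (the relevant structure of a
CAT(0) space): `γ x y` is the affinely parametrized geodesic from `x` to `y` on `[0,1]`,
it is the unique such path, and the distance between points with the same parameter on
two geodesics issuing from a common point is a convex function of the parameter. -/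
structure GeodesicCAT0 (X : Type*) [MetricSpace X] where
  γ : X → X → ℝ → X
  γ_zero : ∀ x y, γ x y 0 = x
  γ_one : ∀ x y, γ x y 1 = y
  γ_dist : ∀ x y, ∀ s ∈ Set.Icc (0:ℝ) 1, ∀ t ∈ Set.Icc (0:ℝ) 1,
    dist (γ x y s) (γ x y t) = |s - t| * dist x y
  unique : ∀ x y (c : ℝ → X), c 0 = x → c 1 = y →
    (∀ s ∈ Set.Icc (0:ℝ) 1, ∀ t ∈ Set.Icc (0:ℝ) 1,
      dist (c s) (c t) = |s - t| * dist x y) →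
    ∀ t ∈ Set.Icc (0:ℝ) 1, c t = γ x y t
  convex : ∀ x y y', ∀ t ∈ Set.Icc (0:ℝ) 1, dist (γ x y t) (γ x y' t) ≤ t * dist y y'

/-- A strict star domain in `(X, x₀)`: a closed bounded subset `D` containing `x₀`,
distinct from `{x₀}`, such that for every `x ∈ D \ {x₀}` the geodesic segment `[x₀,x]`
lies in `D` and the half-open segment `[x₀,x)` lies in the interior of `D`. -/
def IsStrictStar {X : Type*} [MetricSpace X] (g : GeodesicCAT0 X) (x₀ : X)
    (D : Set X) : Prop :=
  IsClosed D ∧ Bornology.IsBounded D ∧ x₀ ∈ D ∧ D ≠ {x₀} ∧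
  ∀ x ∈ D, x ≠ x₀ →
    g.γ x₀ x '' Set.Icc (0:ℝ) 1 ⊆ D ∧ g.γ x₀ x '' Set.Ico (0:ℝ) 1 ⊆ interior D

/-!
The segment `[x₀, y]` is connected, starts in `interior D` (the star condition applied to any
`x ∈ D \ {x₀}` puts `x₀ = γ x₀ x 0` there) and ends outside it, so it meets `∂D`. If it met `∂D`
at parameters `s < t`, then `γ x₀ y t ∈ D` and, after reparametrizing `[x₀, γ x₀ y t]` as a
subsegment of `[x₀, y]`, the point `γ x₀ y s` lies on the half-open segment `[x₀, γ x₀ y t)`,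
hence in `interior D`, contradicting `γ x₀ y s ∈ ∂D`.
-/

open Set

theorem IsPreconnected.inter_frontier_nonempty {α : Type*} [TopologicalSpace α] {s t : Set α}
    (hs : IsPreconnected s) (hst : (s ∩ t).Nonempty) (hst' : (s \ t).Nonempty) :
    (s ∩ frontier t).Nonempty := by
  by_contra hfr
  have hcl : closure t ∩ s ⊆ interior t := fun x ⟨hxt, hxs⟩ ↦
    by_contra fun hxi ↦ hfr ⟨x, hxs, hxt, hxi⟩
  have hint : (s ∩ interior t).Nonempty := by
    obtain ⟨x, hxs, hxt⟩ := hst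
    exact ⟨x, hxs, hcl ⟨subset_closure hxt, hxs⟩⟩
  have hsub : s ⊆ interior t := hs.subset_of_closure_inter_subset isOpen_interior hint
    ((inter_subset_inter_left _ (closure_mono interior_subset)).trans hcl)
  obtain ⟨x, hxs, hxt⟩ := hst'
  exact hxt (interior_subset (hsub hxs))

namespace GeodesicCAT0

variable {X : Type*} [MetricSpace X] (g : GeodesicCAT0 X)

theorem dist_γ_left (x y : X) {t : ℝ} (ht : t ∈ Icc (0 : ℝ) 1) :
    dist x (g.γ x y t) = t * dist x y := by
  simpa [g.γ_zero, abs_of_nonneg ht.1] using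
    g.γ_dist x y 0 (left_mem_Icc.2 zero_le_one) t ht

theorem γ_self (x : X) {t : ℝ} (ht : t ∈ Icc (0 : ℝ) 1) : g.γ x x t = x := by
  simpa [eq_comm] using g.dist_γ_left x x ht

theorem continuousOn_γ (x y : X) : ContinuousOn (g.γ x y) (Icc 0 1) :=
  (LipschitzOnWith.of_dist_le_mul (K := nndist x y) fun s hs t ht ↦ by
    rw [g.γ_dist x y s hs t ht, Real.dist_eq, coe_nndist, mul_comm]).continuousOn

theorem isConnected_image_γ (x y : X) : IsConnected (g.γ x y '' Icc 0 1) :=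
  isConnected_Icc zero_le_one |>.image _ (g.continuousOn_γ x y)

theorem γ_mul (x y : X) {T u : ℝ} (hT : T ∈ Icc (0 : ℝ) 1) (hu : u ∈ Icc (0 : ℝ) 1) :
    g.γ x y (T * u) = g.γ x (g.γ x y T) u := by
  have hmem : ∀ v ∈ Icc (0 : ℝ) 1, T * v ∈ Icc (0 : ℝ) 1 := fun v hv ↦
    ⟨mul_nonneg hT.1 hv.1, (mul_le_of_le_one_right hT.1 hv.2).trans hT.2⟩
  refine g.unique x _ (fun v ↦ g.γ x y (T * v)) (by simp [g.γ_zero]) (by simp) ?_ u hu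
  intro v hv w hw
  rw [g.γ_dist x y _ (hmem v hv) _ (hmem w hw), g.dist_γ_left x y hT, ← mul_sub, abs_mul,
    abs_of_nonneg hT.1, mul_left_comm, mul_assoc]

end GeodesicCAT0

namespace IsStrictStar

variable {X : Type*} [MetricSpace X] {g : GeodesicCAT0 X} {x₀ : X} {D : Set X}

theorem base_mem_interior (hD : IsStrictStar g x₀ D) : x₀ ∈ interior D := by
  obtain ⟨-, -, hx₀, hne, hstar⟩ := hD
  obtain ⟨x, hx, hxx₀⟩ : ∃ x ∈ D, x ≠ x₀ := by
    by_contra! h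
    exact hne (eq_singleton_iff_unique_mem.2 ⟨hx₀, h⟩)
  simpa [g.γ_zero] using (hstar x hx hxx₀).2 ⟨0, ⟨le_rfl, zero_lt_one⟩, rfl⟩

theorem γ_mem_interior (hD : IsStrictStar g x₀ D) {z : X} (hz : z ∈ D) {u : ℝ}
    (hu : u ∈ Ico (0 : ℝ) 1) : g.γ x₀ z u ∈ interior D := by
  rcases eq_or_ne z x₀ with rfl | hzx₀
  · rw [g.γ_self z (Ico_subset_Icc_self hu)]
    exact hD.base_mem_interior
  · exact (hD.2.2.2.2 z hz hzx₀).2 ⟨u, hu, rfl⟩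

theorem γ_mem_interior_of_lt (hD : IsStrictStar g x₀ D) (y : X) {s t : ℝ} (hs : 0 ≤ s)
    (hst : s < t) (ht : t ∈ Icc (0 : ℝ) 1) (hD_t : g.γ x₀ y t ∈ D) :
    g.γ x₀ y s ∈ interior D := by
  have ht₀ : 0 < t := hs.trans_lt hst
  have hu : s / t ∈ Ico (0 : ℝ) 1 := ⟨div_nonneg hs ht.1, (div_lt_one ht₀).2 hst⟩
  rw [← mul_div_cancel₀ s ht₀.ne', g.γ_mul x₀ y ht (Ico_subset_Icc_self hu)]
  exact hD.γ_mem_interior hD_t hu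

theorem not_lt_of_γ_mem_frontier (hD : IsStrictStar g x₀ D) (y : X) {s t : ℝ}
    (hs : s ∈ Icc (0 : ℝ) 1) (ht : t ∈ Icc (0 : ℝ) 1) (hs_fr : g.γ x₀ y s ∈ frontier D)
    (ht_fr : g.γ x₀ y t ∈ frontier D) : ¬ s < t := fun hst ↦
  hs_fr.2 (hD.γ_mem_interior_of_lt y hs.1 hst ht (hD.1.frontier_subset ht_fr))

end IsStrictStar

theorem stmt10 {X : Type*} [MetricSpace X] (g : GeodesicCAT0 X)
    (x₀ : X)
    (D : Set X) (hD : IsStrictStar g x₀ D)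
    (y : X) (hy : y ∉ interior D) :
    ∃! p, p ∈ g.γ x₀ y '' Set.Icc (0:ℝ) 1 ∧ p ∈ frontier D := by
  have hx₀ : x₀ ∈ g.γ x₀ y '' Icc 0 1 := ⟨0, left_mem_Icc.2 zero_le_one, g.γ_zero x₀ y⟩
  have hy' : y ∈ g.γ x₀ y '' Icc 0 1 := ⟨1, right_mem_Icc.2 zero_le_one, g.γ_one x₀ y⟩
  obtain ⟨p, hp_seg, hp_fr⟩ :=
    (g.isConnected_image_γ x₀ y).isPreconnected.inter_frontier_nonempty
      ⟨x₀, hx₀, hD.base_mem_interior⟩ ⟨y, hy', hy⟩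
  replace hp_fr := frontier_interior_subset hp_fr
  refine ⟨p, ⟨hp_seg, hp_fr⟩, ?_⟩
  rintro _ ⟨⟨s, hs, rfl⟩, hs_fr⟩
  obtain ⟨t, ht, rfl⟩ := hp_seg
  rw [le_antisymm (not_lt.1 (hD.not_lt_of_γ_mem_frontier y ht hs hp_fr hs_fr))
    (not_lt.1 (hD.not_lt_of_γ_mem_frontier y hs ht hs_fr hp_fr))]
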